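/- arXiv:1606.08842 — 3 statements merged into one kernel-verified Lean document; each statement's English description precedes it below -/
import Mathlib

section
/- For an n×n pairwise comparison matrix M with M_ij + M_ji = 1 for i≠j and entries in [0,1], if π is a permutation ordering the scores non-increasingly (τ_{π(1)} ≥ τ_{π(2)} ≥ ... ≥ τ_{π(n)}), then for every j ∈ [n], Σ_{i=1}^j τ_{π(i)} ≥ (1/(n-1)) · j(j-1)/2. -/
/-!
Read `M i j` as the points player `i` takes from its game against `j`. The `k(k-1)/2` games played
among any `k` players hand out exactly one point each, all of it to those players, and every other
game adds a nonnegative amount to their scores; so any `k` players, in particular the top `k`,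
jointly score at least `k(k-1)/2`.
-/

open Finset

section Tournament

variable {ι R : Type*}

lemma sum_offDiag_eq_sum_sum_erase [DecidableEq ι] [AddCommMonoid R] (S : Finset ι)
    (f : ι → ι → R) :
    ∑ p ∈ S.offDiag, f p.1 p.2 = ∑ i ∈ S, ∑ j ∈ S.erase i, f i j :=
  sum_finset_product _ _ _ fun p => by simp only [mem_offDiag, mem_erase]; tauto

lemma sum_offDiag_swap [AddCommMonoid R] (S : Finset ι) (f : ι → ι → R) :
    ∑ p ∈ S.offDiag, f p.2 p.1 = ∑ p ∈ S.offDiag, f p.1 p.2 :=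
  sum_equiv (Equiv.prodComm ι ι) (fun p => by simp only [mem_offDiag]; tauto) fun _ _ => rfl

lemma two_mul_sum_offDiag_eq_of_add_eq_one [CommRing R] (S : Finset ι) (M : ι → ι → R)
    (hskew : ∀ i ∈ S, ∀ j ∈ S, i ≠ j → M i j + M j i = 1) :
    2 * ∑ p ∈ S.offDiag, M p.1 p.2 = #S * (#S - 1 : R) := by
  calc 2 * ∑ p ∈ S.offDiag, M p.1 p.2
      = ∑ p ∈ S.offDiag, (M p.1 p.2 + M p.2 p.1) := by
        rw [two_mul, sum_add_distrib, sum_offDiag_swap]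
    _ = #S.offDiag := by
        rw [sum_congr rfl fun p hp => hskew p.1 (mem_offDiag.1 hp).1 p.2 (mem_offDiag.1 hp).2.1
          (mem_offDiag.1 hp).2.2, sum_const, nsmul_one]
    _ = #S * (#S - 1 : R) := by
        rw [offDiag_card, Nat.cast_sub (Nat.le_mul_self _)]
        push_cast
        ring

lemma card_mul_card_sub_one_div_two_le_sum_sum_erase [DecidableEq ι] [Field R] [LinearOrder R]
    [IsStrictOrderedRing R] [Fintype ι] (S : Finset ι) (M : ι → ι → R)
    (hnonneg : ∀ i j, 0 ≤ M i j) (hskew : ∀ i ∈ S, ∀ j ∈ S, i ≠ j → M i j + M j i = 1) :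
    #S * (#S - 1 : R) / 2 ≤ ∑ i ∈ S, ∑ j ∈ univ.erase i, M i j :=
  calc #S * (#S - 1 : R) / 2 = ∑ i ∈ S, ∑ j ∈ S.erase i, M i j := by
        rw [← two_mul_sum_offDiag_eq_of_add_eq_one S M hskew, sum_offDiag_eq_sum_sum_erase]
        ring
    _ ≤ ∑ i ∈ S, ∑ j ∈ univ.erase i, M i j :=
        sum_le_sum fun i _ => sum_le_sum_of_subset_of_nonneg
          (erase_subset_erase _ (subset_univ S)) fun j _ _ => hnonneg i j

end Tournament

theorem sorted_scores_partial_sum_lower_bound_general (n : ℕ) (hn : 2 ≤ n)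
    (M : Fin n → Fin n → ℝ)
    (hrange : ∀ i j, M i j ∈ Set.Icc (0:ℝ) 1)
    (hskew : ∀ i j, i ≠ j → M i j + M j i = 1)
    (τ : Fin n → ℝ)
    (hτ : ∀ i, τ i = (1/((n:ℝ)-1)) * ∑ j ∈ Finset.univ.erase i, M i j)
    (π : Equiv.Perm (Fin n)) :
    ∀ k : ℕ, k ≤ n →
      ∑ i ∈ Finset.univ.filter (fun i : Fin n => (i : ℕ) < k), τ (π i)
        ≥ (1/((n:ℝ)-1)) * ((k:ℝ) * ((k:ℝ)-1) / 2) := by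
  intro k hk
  set S := (univ.filter fun i : Fin n => (i : ℕ) < k).map π.toEmbedding
  have hcard : #S = k := by rw [card_map, Fin.card_filter_val_lt, min_eq_right hk]
  have hscale : 0 ≤ 1 / ((n:ℝ) - 1) := by
    have : (2:ℝ) ≤ n := by exact_mod_cast hn
    exact one_div_nonneg.2 (by linarith)
  have hbound := card_mul_card_sub_one_div_two_le_sum_sum_erase S M (fun i j => (hrange i j).1)
    fun i _ j _ => hskew i j
  rw [hcard] at hbound
  calc ∑ i ∈ univ.filter (fun i : Fin n => (i : ℕ) < k), τ (π i) = ∑ i ∈ S, τ i := by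
        rw [sum_map]
        rfl
    _ = 1 / ((n:ℝ) - 1) * ∑ i ∈ S, ∑ j ∈ univ.erase i, M i j := by
        rw [mul_sum]
        exact sum_congr rfl fun i _ => hτ i
    _ ≥ 1 / ((n:ℝ) - 1) * ((k:ℝ) * ((k:ℝ) - 1) / 2) := mul_le_mul_of_nonneg_left hbound hscale

/-- Partial sums of sorted Borda scores are lower bounded: Σ_{i=1}^k τ_{π(i)} ≥ k(k-1)/(2(n-1)). -/
theorem sorted_scores_partial_sum_lower_bound (n : ℕ) (hn : 2 ≤ n)
    (M : Fin n → Fin n → ℝ)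
    (hrange : ∀ i j, M i j ∈ Set.Icc (0:ℝ) 1)
    (hskew : ∀ i j, i ≠ j → M i j + M j i = 1)
    (τ : Fin n → ℝ)
    (hτ : ∀ i, τ i = (1/((n:ℝ)-1)) * ∑ j ∈ Finset.univ.erase i, M i j)
    (π : Equiv.Perm (Fin n))
    (hsort : ∀ i j : Fin n, i ≤ j → τ (π j) ≤ τ (π i)) :
    ∀ k : ℕ, k ≤ n →
      ∑ i ∈ Finset.univ.filter (fun i : Fin n => (i : ℕ) < k), τ (π i)
        ≥ (1/((n:ℝ)-1)) * ((k:ℝ) * ((k:ℝ)-1) / 2) :=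
  sorted_scores_partial_sum_lower_bound_general n hn M hrange hskew τ hτ π
end

section
/- If q ∈ [1/8, 7/8], then for any p ∈ (0,1), kl(p,q) ≤ 16·(p-q)². -/
/-- If q ∈ [1/8, 7/8], then kl(p,q) ≤ 16(p-q)² for all p ∈ (0,1). -/
theorem kl_le_sixteen_sq (p q : ℝ) (hp : p ∈ Set.Ioo (0:ℝ) 1)
    (hq : q ∈ Set.Icc (1/8 : ℝ) (7/8)) :
    p * Real.log (p/q) + (1-p) * Real.log ((1-p)/(1-q)) ≤ 16 * (p-q)^2 := by
  obtain ⟨hp0, hp1⟩ := hp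
  obtain ⟨hq1, hq2⟩ := hq
  have hq0 : (0:ℝ) < q := by linarith
  have hq1' : q < 1 := by linarith
  have h1 : Real.log (p/q) ≤ p/q - 1 :=
    Real.log_le_sub_one_of_pos (by positivity)
  have h2 : Real.log ((1-p)/(1-q)) ≤ (1-p)/(1-q) - 1 :=
    Real.log_le_sub_one_of_pos (by
      apply div_pos <;> linarith)
  have key : p * Real.log (p/q) + (1-p) * Real.log ((1-p)/(1-q)) ≤
      p * (p/q - 1) + (1-p) * ((1-p)/(1-q) - 1) := by
    have := mul_le_mul_of_nonneg_left h1 hp0.le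
    have := mul_le_mul_of_nonneg_left h2 (by linarith : (0:ℝ) ≤ 1-p)
    linarith
  refine key.trans ?_
  have hqne : q ≠ 0 := ne_of_gt hq0
  have hqne' : (1:ℝ) - q ≠ 0 := by linarith
  have heq : p * (p/q - 1) + (1-p) * ((1-p)/(1-q) - 1) = (p-q)^2 / (q*(1-q)) := by
    field_simp
    ring
  rw [heq, div_le_iff₀ (by nlinarith : (0:ℝ) < q * (1-q))]
  have h16 : 1 ≤ 16 * (q * (1-q)) := by nlinarith [mul_nonneg (by linarith : (0:ℝ) ≤ q - 1/8) (by linarith : (0:ℝ) ≤ 7/8 - q)]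
  nlinarith [mul_le_mul_of_nonneg_left h16 (sq_nonneg (p-q))]
end

section
/- Let τ, τ̂ : S → ℝ with |τ̂_i - τ_i| ≤ α for all i in a finite set S, let k' achieve the k-th largest estimated value, and let j ∈ S. If τ̂_j < τ̂_{k'} - 4α, then τ_j < τ_{⟨k⟩}, where τ_{⟨k⟩} is the k-th largest true value. -/
open Finset

/-- If τ̂_j is more than 4α below the k-th largest estimate, then the true value τ_j lies
strictly below the k-th largest true value T. -/
theorem below_kth_largest (ι : Type*) [Fintype ι] [DecidableEq ι]
    (τ τhat : ι → ℝ) (α : ℝ) (hα : 0 ≤ α)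
    (hclose : ∀ i, |τhat i - τ i| ≤ α)
    (k : ℕ) (hk1 : 1 ≤ k) (hk2 : k ≤ Fintype.card ι)
    (T : ℝ)
    (hT1 : k ≤ (univ.filter (fun i => T ≤ τ i)).card)
    (hT2 : (univ.filter (fun i => T < τ i)).card < k)
    (k' : ι)
    (hk'1 : k ≤ (univ.filter (fun i => τhat k' ≤ τhat i)).card)
    (hk'2 : (univ.filter (fun i => τhat k' < τhat i)).card < k)
    (j : ι) (hj : τhat j < τhat k' - 4*α) :
    τ j < T := by
  classical
  have hnsub : ¬ (univ.filter (fun i => τhat k' ≤ τhat i)) ⊆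
      (univ.filter (fun i => T < τ i)) := by
    intro h
    have := Finset.card_le_card h
    omega
  obtain ⟨i, hiA, hiB⟩ := Finset.not_subset.mp hnsub
  simp only [mem_filter, mem_univ, true_and] at hiA hiB
  push_neg at hiB
  have h1 := abs_le.mp (hclose i)
  have h2 := abs_le.mp (hclose j)
  linarith
end
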